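/- Suppose V = X (i.e., v is the identity on 𝒳) and λ(p) ≥ 0 for all p ∈ (0,1). Let τ : 𝒳 → ℝ be measurable with τ∘X a version of E[Y¹ − Y⁰ | σ(X)]. Then for every measurable g : 𝒳 → ℝ (with all expectations below finite), E[w·(φ − τ(X))²] ≤ E[w·(φ − g(X))²]; i.e., the conditional average treatment effect minimizes the Neyman-orthogonal weighted population risk for every choice of the weight function λ. -/

import Mathlib

open MeasureTheory ProbabilityTheory

/-- The weight `w = (A − π(X))·λ'(π(X)) + λ(π(X))`. -/
noncomputable def wFun {Ω 𝓧 : Type*} (lam lam' : ℝ → ℝ) (A : Ω → ℝ) (X : Ω → 𝓧)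
    (p : 𝓧 → ℝ) (ω : Ω) : ℝ :=
  (A ω - p (X ω)) * lam' (p (X ω)) + lam (p (X ω))

/-- The pseudo-outcome
`φ = (λ(π(X))/w)·[(A/π(X))(Y − Q¹(X)) − ((1−A)/(1−π(X)))(Y − Q⁰(X))] + Q¹(X) − Q⁰(X)`. -/
noncomputable def phiFun {Ω 𝓧 : Type*} (lam lam' : ℝ → ℝ) (A Y : Ω → ℝ) (X : Ω → 𝓧)
    (p q0 q1 : 𝓧 → ℝ) (ω : Ω) : ℝ :=
  lam (p (X ω)) / wFun lam lam' A X p ω *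
      (A ω / p (X ω) * (Y ω - q1 (X ω)) - (1 - A ω) / (1 - p (X ω)) * (Y ω - q0 (X ω)))
    + q1 (X ω) - q0 (X ω)

/-!
Writing `φ = (λ(π) / w) r + Q¹ - Q⁰` with `r` the inverse-propensity weighted residual, the
`λ(π)² r² / w` terms of `w (φ - τ)²` and `w (φ - g)²` cancel, and since `r` is affine in `A` so is
the gap between the two losses:
`w (φ - τ)² - w (φ - g)² = K (A - π(X)) - λ(π(X)) (g - τ)² + 2 λ(π(X)) (g - τ) (Y¹ - Y⁰ - τ)`
with `K` (`riskGapSlope`) a function of `X` and `(Y⁰, Y¹)`. Conditional exchangeability gives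
`E[A | X, Y⁰, Y¹] = π(X)`, which kills the first term in expectation, and the last term vanishes
because `τ(X) = E[Y¹ - Y⁰ | X]`. What is left is `-E[λ(π(X)) (g - τ)²] ≤ 0`.
-/

open Set

section

variable {Ω : Type*}

theorem IsPiSystem.image2_inter {C D : Set (Set Ω)} (hC : IsPiSystem C) (hD : IsPiSystem D) :
    IsPiSystem (image2 (· ∩ ·) C D) := by
  rintro _ ⟨s₁, hs₁, t₁, ht₁, rfl⟩ _ ⟨s₂, hs₂, t₂, ht₂, rfl⟩ hne
  rw [inter_inter_inter_comm] at hne ⊢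
  exact mem_image2_of_mem (hC _ hs₁ _ hs₂ hne.left) (hD _ ht₁ _ ht₂ hne.right)

theorem MeasurableSpace.sup_eq_generateFrom_image2_inter (m₁ m₂ : MeasurableSpace Ω) :
    m₁ ⊔ m₂ = generateFrom
      (image2 (· ∩ ·) {s | MeasurableSet[m₁] s} {t | MeasurableSet[m₂] t}) := by
  refine le_antisymm (sup_le (fun s hs => ?_) (fun t ht => ?_)) (generateFrom_le ?_)
  · exact measurableSet_generateFrom ⟨s, hs, univ, MeasurableSet.univ, inter_univ s⟩
  · exact measurableSet_generateFrom ⟨univ, MeasurableSet.univ, t, ht, univ_inter t⟩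
  · rintro _ ⟨s, hs, t, ht, rfl⟩
    exact (le_sup_left (b := m₂) s hs).inter (le_sup_right (a := m₁) t ht)

section PiSystem

variable {E : Type*} [NormedAddCommGroup E] [NormedSpace ℝ E]
  {m m₀ : MeasurableSpace Ω} {μ : Measure Ω} {s : Set (Set Ω)} {f g : Ω → E}

theorem setIntegral_eq_setIntegral_of_isPiSystem (hm : m ≤ m₀)
    (h_eq : m = MeasurableSpace.generateFrom s) (h_inter : IsPiSystem s)
    (hf : Integrable f μ) (hg : Integrable g μ)
    (basic : ∀ t ∈ s, ∫ x in t, f x ∂μ = ∫ x in t, g x ∂μ)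
    (h_univ : ∫ x, f x ∂μ = ∫ x, g x ∂μ) :
    ∀ t, MeasurableSet[m] t → ∫ x in t, f x ∂μ = ∫ x in t, g x ∂μ := by
  refine MeasurableSpace.induction_on_inter h_eq h_inter (by simp) basic ?_ ?_
  · intro t ht h
    rw [setIntegral_compl (hm t ht) hf, setIntegral_compl (hm t ht) hg, h, h_univ]
  · intro t hdisj ht h
    rw [integral_iUnion (fun i => hm _ (ht i)) hdisj hf.integrableOn,
      integral_iUnion (fun i => hm _ (ht i)) hdisj hg.integrableOn]
    exact tsum_congr h

theorem ae_eq_condExp_of_isPiSystem [CompleteSpace E] (hm : m ≤ m₀) [SigmaFinite (μ.trim hm)]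
    (h_eq : m = MeasurableSpace.generateFrom s) (h_inter : IsPiSystem s)
    (hf : Integrable f μ) (hg : Integrable g μ) (hgm : AEStronglyMeasurable[m] g μ)
    (basic : ∀ t ∈ s, ∫ x in t, g x ∂μ = ∫ x in t, f x ∂μ)
    (h_univ : ∫ x, g x ∂μ = ∫ x, f x ∂μ) :
    g =ᵐ[μ] μ[f | m] :=
  ae_eq_condExp_of_forall_setIntegral_eq hm hf (fun _ _ _ => hg.integrableOn)
    (fun t ht _ => setIntegral_eq_setIntegral_of_isPiSystem hm h_eq h_inter hg hf basic h_univ t ht)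
    hgm

end PiSystem

theorem integral_mul_sub_eq_zero_of_ae_eq_condExp {m mΩ : MeasurableSpace Ω} {μ : Measure Ω}
    (hm : m ≤ mΩ) [SigmaFinite (μ.trim hm)] {f h k : Ω → ℝ} (hf : StronglyMeasurable[m] f)
    (hh : Integrable h μ) (hk : k =ᵐ[μ] μ[h | m])
    (hfhk : Integrable (fun ω => f ω * (h ω - k ω)) μ) :
    ∫ ω, f ω * (h ω - k ω) ∂μ = 0 := by
  have hk_int : Integrable k μ := integrable_condExp.congr hk.symm
  have h_centered : μ[h - k | m] =ᵐ[μ] 0 := by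
    filter_upwards [condExp_sub hh hk_int m, condExp_congr_ae (m := m) hk,
      condExp_condExp_of_le (f := h) le_rfl hm] with ω h_sub h_congr h_tower
    simp [h_sub, h_congr, h_tower]
  calc ∫ ω, f ω * (h ω - k ω) ∂μ = ∫ ω, μ[f * (h - k) | m] ω ∂μ := (integral_condExp hm).symm
    _ = ∫ ω, f ω * μ[h - k | m] ω ∂μ :=
      integral_congr_ae (condExp_mul_of_stronglyMeasurable_left (g := h - k) hf hfhk
        (hh.sub hk_int))
    _ = ∫ ω, f ω * 0 ∂μ := integral_congr_ae (h_centered.mono fun ω hω => by simp [hω])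
    _ = 0 := by simp

theorem integral_le_integral_of_sub_ae_eq_centered {m₁ m₂ mΩ : MeasurableSpace Ω}
    {μ : Measure Ω} (hm₁ : m₁ ≤ mΩ) (hm₂ : m₂ ≤ mΩ) [SigmaFinite (μ.trim hm₁)]
    [SigmaFinite (μ.trim hm₂)] {F G L f₁ h₁ k₁ f₂ h₂ k₂ : Ω → ℝ}
    (hF : Integrable F μ) (hG : Integrable G μ) (hL : Integrable L μ) (hL0 : 0 ≤ᵐ[μ] L)
    (hf₁ : StronglyMeasurable[m₁] f₁) (hh₁ : Integrable h₁ μ) (hk₁ : k₁ =ᵐ[μ] μ[h₁ | m₁])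
    (hf₂ : StronglyMeasurable[m₂] f₂) (hh₂ : Integrable h₂ μ) (hk₂ : k₂ =ᵐ[μ] μ[h₂ | m₂])
    (hV : Integrable (fun ω => f₂ ω * (h₂ ω - k₂ ω)) μ)
    (h_gap : ∀ᵐ ω ∂μ, F ω - G ω = f₁ ω * (h₁ ω - k₁ ω) - L ω + f₂ ω * (h₂ ω - k₂ ω)) :
    ∫ ω, F ω ∂μ ≤ ∫ ω, G ω ∂μ := by
  have hU : Integrable (fun ω => f₁ ω * (h₁ ω - k₁ ω)) μ :=
    (((hF.sub hG).add hL).sub hV).congr <| h_gap.mono fun ω h => by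
      simp only [Pi.add_apply, Pi.sub_apply]
      linarith
  have h_int : ∫ ω, F ω ∂μ - ∫ ω, G ω ∂μ = ∫ ω, f₁ ω * (h₁ ω - k₁ ω) ∂μ - ∫ ω, L ω ∂μ
      + ∫ ω, f₂ ω * (h₂ ω - k₂ ω) ∂μ := by
    rw [← integral_sub hF hG, ← integral_sub hU hL,
      ← integral_add (hU.sub hL : Integrable (fun ω => _ - _) μ) hV]
    exact integral_congr_ae h_gap
  rw [integral_mul_sub_eq_zero_of_ae_eq_condExp hm₁ hf₁ hh₁ hk₁ hU,
    integral_mul_sub_eq_zero_of_ae_eq_condExp hm₂ hf₂ hh₂ hk₂ hV] at h_int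
  linarith [integral_nonneg_of_ae hL0]

theorem indicator_preimage_one_eq_self {A : Ω → ℝ} (hA01 : ∀ ω, A ω = 0 ∨ A ω = 1) :
    (A ⁻¹' {1}).indicator (fun _ => (1 : ℝ)) = A := by
  funext ω
  rcases hA01 ω with h | h <;> simp [h]

theorem integrable_of_forall_eq_zero_or_eq_one [MeasurableSpace Ω] {μ : Measure Ω}
    [IsFiniteMeasure μ] {A : Ω → ℝ} (hA : Measurable A)
    (hA01 : ∀ ω, A ω = 0 ∨ A ω = 1) : Integrable A μ :=
  .of_bound hA.aestronglyMeasurable 1 <| ae_of_all _ fun ω => by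
    rcases hA01 ω with h | h <;> simp [h]

section CondIndep

variable {m' mΩ : MeasurableSpace Ω} [StandardBorelSpace Ω] {μ : Measure Ω} [IsFiniteMeasure μ]
  {hm' : m' ≤ mΩ} {β : Type*} [MeasurableSpace β] {Z : Ω → β} {A : Ω → ℝ}

theorem setIntegral_inter_preimage_condExp_eq_of_condIndepFun (hZ : Measurable Z)
    (hA : Measurable A) (hA01 : ∀ ω, A ω = 0 ∨ A ω = 1) (hCE : CondIndepFun m' hm' Z A μ)
    {s : Set Ω} (hs : MeasurableSet[m'] s) {u : Set β} (hu : MeasurableSet u) :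
    ∫ ω in s ∩ Z ⁻¹' u, μ[A | m'] ω ∂μ = ∫ ω in s ∩ Z ⁻¹' u, A ω ∂μ := by
  have hA_ind := indicator_preimage_one_eq_self hA01
  have hZu : MeasurableSet (Z ⁻¹' u) := hZ hu
  have h_prod := (condIndepFun_iff_condExp_inter_preimage_eq_mul hZ hA).1 hCE u {1} hu
    (measurableSet_singleton 1)
  rw [hA_ind] at h_prod
  have h_mul : (Z ⁻¹' u).indicator μ[A | m']
      = μ[A | m'] * (Z ⁻¹' u).indicator (fun _ => (1 : ℝ)) := by
    funext ω
    by_cases hω : ω ∈ Z ⁻¹' u <;> simp [hω]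
  -- `E[1_{Z ∈ u} E[A | m'] | m'] = P(Z ∈ u | m') P(A = 1 | m') = P(Z ∈ u, A = 1 | m')`
  have h_cond : μ[(Z ⁻¹' u).indicator μ[A | m'] | m'] =ᵐ[μ] μ[(Z ⁻¹' u).indicator A | m'] := by
    rw [h_mul]
    refine (condExp_mul_of_stronglyMeasurable_left stronglyMeasurable_condExp
      (h_mul ▸ integrable_condExp.indicator hZu) ((integrable_const 1).indicator hZu)).trans ?_
    rw [← hA_ind, indicator_indicator]
    filter_upwards [h_prod] with ω hω
    rw [hω, Pi.mul_apply, mul_comm, hA_ind]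
  have hA_int : Integrable A μ := integrable_of_forall_eq_zero_or_eq_one hA hA01
  calc ∫ ω in s ∩ Z ⁻¹' u, μ[A | m'] ω ∂μ
      = ∫ ω in s, (Z ⁻¹' u).indicator μ[A | m'] ω ∂μ := (setIntegral_indicator hZu).symm
    _ = ∫ ω in s, μ[(Z ⁻¹' u).indicator μ[A | m'] | m'] ω ∂μ :=
      (setIntegral_condExp hm' (integrable_condExp.indicator hZu) hs).symm
    _ = ∫ ω in s, μ[(Z ⁻¹' u).indicator A | m'] ω ∂μ := setIntegral_congr_ae (hm' s hs)
      (h_cond.mono fun _ h _ => h)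
    _ = ∫ ω in s, (Z ⁻¹' u).indicator A ω ∂μ := setIntegral_condExp hm' (hA_int.indicator hZu) hs
    _ = ∫ ω in s ∩ Z ⁻¹' u, A ω ∂μ := setIntegral_indicator hZu

theorem condExp_sup_comap_ae_eq_of_condIndepFun (hZ : Measurable Z) (hA : Measurable A)
    (hA01 : ∀ ω, A ω = 0 ∨ A ω = 1) (hCE : CondIndepFun m' hm' Z A μ) :
    μ[A | m' ⊔ MeasurableSpace.comap Z inferInstance] =ᵐ[μ] μ[A | m'] := by
  refine (ae_eq_condExp_of_isPiSystem (sup_le hm' hZ.comap_le)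
    (MeasurableSpace.sup_eq_generateFrom_image2_inter _ _)
    ((@MeasurableSpace.isPiSystem_measurableSet _ m').image2_inter
      (@MeasurableSpace.isPiSystem_measurableSet _ (.comap Z inferInstance)))
    (integrable_of_forall_eq_zero_or_eq_one hA hA01) integrable_condExp
    (stronglyMeasurable_condExp.mono
      (le_sup_left (b := .comap Z inferInstance))).aestronglyMeasurable ?_
    (integral_condExp hm')).symm
  rintro _ ⟨s, hs, _, ⟨u, hu, rfl⟩, rfl⟩
  exact setIntegral_inter_preimage_condExp_eq_of_condIndepFun hZ hA hA01 hCE hs hu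

end CondIndep

theorem integrable_mul_sq_sub_of_mul_sq_sub [MeasurableSpace Ω] {μ : Measure Ω}
    {l a b c : Ω → ℝ} (hl : ∀ ω, 0 ≤ l ω)
    (hb : Integrable (fun ω => l ω * (a ω - b ω) ^ 2) μ)
    (hc : Integrable (fun ω => l ω * (a ω - c ω) ^ 2) μ)
    (hm : AEStronglyMeasurable (fun ω => l ω * (b ω - c ω) ^ 2) μ) :
    Integrable (fun ω => l ω * (b ω - c ω) ^ 2) μ := by
  refine ((hb.add hc).const_mul 2).mono' hm (ae_of_all _ fun ω => ?_)
  rw [Real.norm_of_nonneg (mul_nonneg (hl ω) (sq_nonneg _)), Pi.add_apply]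
  nlinarith [mul_nonneg (hl ω) (sq_nonneg (a ω - b ω + (a ω - c ω)))]

end

theorem mul_sq_sub_mul_sq_of_ne_zero {w l r d t c : ℝ} (hw : w ≠ 0) :
    w * (l / w * r + d - t) ^ 2 - w * (l / w * r + d - c) ^ 2
      = (c - t) * (2 * l * r + w * (2 * d - t - c)) := by
  field_simp
  ring

theorem ipw_residual_eq {a p y y0 y1 q0 q1 : ℝ} (ha : a = 0 ∨ a = 1) (hp0 : 0 < p) (hp1 : p < 1)
    (hy : y = a * y1 + (1 - a) * y0) :
    a / p * (y - q1) - (1 - a) / (1 - p) * (y - q0)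
      = (a - p) * ((y1 - q1) / p + (y0 - q0) / (1 - p)) + (y1 - q1) - (y0 - q0) := by
  have hp1' : 1 - p ≠ 0 := by linarith
  rcases ha with rfl | rfl <;> subst hy <;> field_simp <;> ring

noncomputable def riskGapSlope (l l' p y0 y1 q0 q1 t c : ℝ) : ℝ :=
  l' * (c - t) * (2 * (q1 - q0) - t - c) + 2 * l * (c - t) * ((y1 - q1) / p + (y0 - q0) / (1 - p))

theorem wFun_mul_sq_sub_wFun_mul_sq {Ω 𝓧 : Type*} {lam lam' : ℝ → ℝ} {A Y Y0 Y1 : Ω → ℝ}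
    {X : Ω → 𝓧} {p q0 q1 : 𝓧 → ℝ} {ω : Ω} (hA : A ω = 0 ∨ A ω = 1)
    (hY : Y ω = A ω * Y1 ω + (1 - A ω) * Y0 ω) (hp0 : 0 < p (X ω)) (hp1 : p (X ω) < 1)
    (hw : wFun lam lam' A X p ω ≠ 0) (t c : ℝ) :
    wFun lam lam' A X p ω * (phiFun lam lam' A Y X p q0 q1 ω - t) ^ 2
        - wFun lam lam' A X p ω * (phiFun lam lam' A Y X p q0 q1 ω - c) ^ 2
      = riskGapSlope (lam (p (X ω))) (lam' (p (X ω))) (p (X ω)) (Y0 ω) (Y1 ω) (q0 (X ω))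
            (q1 (X ω)) t c * (A ω - p (X ω))
        - lam (p (X ω)) * (c - t) ^ 2 + 2 * lam (p (X ω)) * (c - t) * (Y1 ω - Y0 ω - t) := by
  rw [phiFun, add_sub_assoc, mul_sq_sub_mul_sq_of_ne_zero hw, ipw_residual_eq hA hp0 hp1 hY,
    riskGapSlope, wFun]
  ring


theorem stmt14_general {Ω 𝓧 : Type*} [MeasurableSpace Ω] [StandardBorelSpace Ω]
    [MeasurableSpace 𝓧]
    (P : Measure Ω) [IsProbabilityMeasure P]
    (X : Ω → 𝓧) (hX : Measurable X)
    (A Y0 Y1 Y : Ω → ℝ) (hA : Measurable A) (hY0 : Measurable Y0) (hY1 : Measurable Y1)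
    (hA01 : ∀ ω, A ω = 0 ∨ A ω = 1)
    (hYdef : ∀ ω, Y ω = A ω * Y1 ω + (1 - A ω) * Y0 ω)
    (pr : 𝓧 → ℝ) (hprm : Measurable pr) (hpr : ∀ x, 0 < pr x ∧ pr x < 1)
    (hprCE : (fun ω => pr (X ω)) =ᵐ[P] P[A | MeasurableSpace.comap X inferInstance])
    (hCE : CondIndepFun (MeasurableSpace.comap X inferInstance) hX.comap_le
      (fun ω => (Y0 ω, Y1 ω)) A P)
    (Q0 Q1 : 𝓧 → ℝ) (hQ0m : Measurable Q0) (hQ1m : Measurable Q1)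
    (lam lam' : ℝ → ℝ) (hlam : ∀ p, HasDerivAt lam (lam' p) p) (hlam' : Continuous lam')
    (hlamnn : ∀ p : ℝ, 0 < p → p < 1 → 0 ≤ lam p)
    (hw : ∀ᵐ ω ∂P, wFun lam lam' A X pr ω ≠ 0)
    (τ : 𝓧 → ℝ) (hτm : Measurable τ)
    (hτ : (fun ω => τ (X ω)) =ᵐ[P]
      P[fun ω => Y1 ω - Y0 ω | MeasurableSpace.comap X inferInstance])
    (hIY : Integrable (fun ω => Y1 ω - Y0 ω) P)
    (g : 𝓧 → ℝ) (hg : Measurable g)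
    (hI1 : Integrable (fun ω => wFun lam lam' A X pr ω *
      (phiFun lam lam' A Y X pr Q0 Q1 ω - τ (X ω)) ^ 2) P)
    (hI2 : Integrable (fun ω => wFun lam lam' A X pr ω *
      (phiFun lam lam' A Y X pr Q0 Q1 ω - g (X ω)) ^ 2) P)
    (hI3 : Integrable (fun ω => lam (pr (X ω)) * ((Y1 ω - Y0 ω) - τ (X ω)) ^ 2) P)
    (hI4 : Integrable (fun ω => lam (pr (X ω)) * ((Y1 ω - Y0 ω) - g (X ω)) ^ 2) P) :
    ∫ ω, wFun lam lam' A X pr ω * (phiFun lam lam' A Y X pr Q0 Q1 ω - τ (X ω)) ^ 2 ∂P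
      ≤ ∫ ω, wFun lam lam' A X pr ω * (phiFun lam lam' A Y X pr Q0 Q1 ω - g (X ω)) ^ 2 ∂P := by
  have hlam_m : Measurable lam :=
    (continuous_iff_continuousAt.2 fun p => (hlam p).continuousAt).measurable
  have hZ : Measurable fun ω => (Y0 ω, Y1 ω) := hY0.prodMk hY1
  have hXZ : Measurable[MeasurableSpace.comap X inferInstance ⊔
      MeasurableSpace.comap (fun ω => (Y0 ω, Y1 ω)) inferInstance] fun ω => (X ω, Y0 ω, Y1 ω) := by
    rw [← MeasurableSpace.comap_prodMk]
    exact comap_measurable _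
  have hpr_G : (fun ω => pr (X ω)) =ᵐ[P] P[A | MeasurableSpace.comap X inferInstance ⊔
      MeasurableSpace.comap (fun ω => (Y0 ω, Y1 ω)) inferInstance] :=
    hprCE.trans (condExp_sup_comap_ae_eq_of_condIndepFun hZ hA hA01 hCE).symm
  have hlam_nn : ∀ ω, 0 ≤ lam (pr (X ω)) := fun ω => hlamnn _ (hpr _).1 (hpr _).2
  have hL : Integrable (fun ω => lam (pr (X ω)) * (g (X ω) - τ (X ω)) ^ 2) P :=
    integrable_mul_sq_sub_of_mul_sq_sub (a := fun ω => Y1 ω - Y0 ω) hlam_nn hI4 hI3 (by fun_prop)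
  refine integral_le_integral_of_sub_ae_eq_centered (sup_le hX.comap_le hZ.comap_le)
    hX.comap_le hI1 hI2 hL (ae_of_all _ fun ω => mul_nonneg (hlam_nn ω) (sq_nonneg _))
    (f₁ := fun ω => riskGapSlope (lam (pr (X ω))) (lam' (pr (X ω))) (pr (X ω)) (Y0 ω) (Y1 ω)
      (Q0 (X ω)) (Q1 (X ω)) (τ (X ω)) (g (X ω)))
    (((show Measurable fun q : 𝓧 × ℝ × ℝ => riskGapSlope (lam (pr q.1)) (lam' (pr q.1)) (pr q.1)
      q.2.1 q.2.2 (Q0 q.1) (Q1 q.1) (τ q.1) (g q.1) by unfold riskGapSlope; fun_prop).comp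
        hXZ).stronglyMeasurable)
    (integrable_of_forall_eq_zero_or_eq_one hA hA01) hpr_G
    (f₂ := fun ω => 2 * lam (pr (X ω)) * (g (X ω) - τ (X ω)))
    (((show Measurable fun x => 2 * lam (pr x) * (g x - τ x) by fun_prop).comp
      (comap_measurable X)).stronglyMeasurable) hIY hτ
    (((hI3.sub hI4).add hL).congr (ae_of_all _ fun ω => by
      simp only [Pi.add_apply, Pi.sub_apply]
      ring)) ?_
  filter_upwards [hw] with ω hω
  exact wFun_mul_sq_sub_wFun_mul_sq (hA01 ω) (hYdef ω) (hpr _).1 (hpr _).2 hω _ _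

/-- Corollary 1: when `V = X` and `λ ≥ 0` on `(0,1)`, the CATE `τ`
minimizes the Neyman-orthogonal weighted population risk for every weight function `λ`. -/
theorem stmt14 {Ω 𝓧 : Type*} [MeasurableSpace Ω] [StandardBorelSpace Ω]
    [MeasurableSpace 𝓧]
    (P : Measure Ω) [IsProbabilityMeasure P]
    (X : Ω → 𝓧) (hX : Measurable X)
    (A Y0 Y1 Y : Ω → ℝ) (hA : Measurable A) (hY0 : Measurable Y0) (hY1 : Measurable Y1)
    (hA01 : ∀ ω, A ω = 0 ∨ A ω = 1)
    (hYdef : ∀ ω, Y ω = A ω * Y1 ω + (1 - A ω) * Y0 ω)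
    (pr : 𝓧 → ℝ) (hprm : Measurable pr) (hpr : ∀ x, 0 < pr x ∧ pr x < 1)
    (hprCE : (fun ω => pr (X ω)) =ᵐ[P] P[A | MeasurableSpace.comap X inferInstance])
    (hCE : CondIndepFun (MeasurableSpace.comap X inferInstance) hX.comap_le
      (fun ω => (Y0 ω, Y1 ω)) A P)
    (Q0 Q1 : 𝓧 → ℝ) (hQ0m : Measurable Q0) (hQ1m : Measurable Q1)
    (hQ1 : P[fun ω => A ω * (Y ω - Q1 (X ω)) | MeasurableSpace.comap X inferInstance]
      =ᵐ[P] fun _ => (0 : ℝ))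
    (hQ0 : P[fun ω => (1 - A ω) * (Y ω - Q0 (X ω)) | MeasurableSpace.comap X inferInstance]
      =ᵐ[P] fun _ => (0 : ℝ))
    (lam lam' : ℝ → ℝ) (hlam : ∀ p, HasDerivAt lam (lam' p) p) (hlam' : Continuous lam')
    (hlamnn : ∀ p : ℝ, 0 < p → p < 1 → 0 ≤ lam p)
    (hw : ∀ᵐ ω ∂P, wFun lam lam' A X pr ω ≠ 0)
    (τ : 𝓧 → ℝ) (hτm : Measurable τ)
    (hτ : (fun ω => τ (X ω)) =ᵐ[P]
      P[fun ω => Y1 ω - Y0 ω | MeasurableSpace.comap X inferInstance])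
    (hIY : Integrable (fun ω => Y1 ω - Y0 ω) P)
    (g : 𝓧 → ℝ) (hg : Measurable g)
    (hI1 : Integrable (fun ω => wFun lam lam' A X pr ω *
      (phiFun lam lam' A Y X pr Q0 Q1 ω - τ (X ω)) ^ 2) P)
    (hI2 : Integrable (fun ω => wFun lam lam' A X pr ω *
      (phiFun lam lam' A Y X pr Q0 Q1 ω - g (X ω)) ^ 2) P)
    (hI3 : Integrable (fun ω => lam (pr (X ω)) * ((Y1 ω - Y0 ω) - τ (X ω)) ^ 2) P)
    (hI4 : Integrable (fun ω => lam (pr (X ω)) * ((Y1 ω - Y0 ω) - g (X ω)) ^ 2) P) :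
    ∫ ω, wFun lam lam' A X pr ω * (phiFun lam lam' A Y X pr Q0 Q1 ω - τ (X ω)) ^ 2 ∂P
      ≤ ∫ ω, wFun lam lam' A X pr ω * (phiFun lam lam' A Y X pr Q0 Q1 ω - g (X ω)) ^ 2 ∂P :=
  stmt14_general P X hX A Y0 Y1 Y hA hY0 hY1 hA01 hYdef pr hprm hpr hprCE hCE Q0 Q1 hQ0m hQ1m lam
    lam' hlam hlam' hlamnn hw τ hτm hτ hIY g hg hI1 hI2 hI3 hI4
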